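/- arXiv:2003.10995 — 2 statements merged into one kernel-verified Lean document; each statement's English description precedes it below -/
import Mathlib

section
/- With F₁ as defined in the context, F₁ is differentiable at 0 and F₁'(0) = F₁(0)·( −log N + 2·Re((Λ'/Λ)(1+2iT,ψ)) − 2·(ξ'/ξ)(2) + ∑_{p prime, p|N} (log p)/(p+1) ). -/
open Complex Filter Topology

noncomputable def xi (s : ℂ) : ℂ :=
  (Real.pi : ℂ) ^ (-s / 2) * Complex.Gamma (s / 2) * riemannZeta s

noncomputable def conjChar {N : ℕ} (ψ : DirichletCharacter ℂ N) : DirichletCharacter ℂ N :=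
  ψ.ringHomComp (starRingEnd ℂ)

noncomputable def Lam {N : ℕ} [NeZero N] (ψ : DirichletCharacter ℂ N) (s : ℂ) : ℂ :=
  ((N : ℂ) / (Real.pi : ℂ)) ^ (s / 2) * Complex.Gamma (s / 2) * DirichletCharacter.LFunction ψ s

noncomputable def nu (N : ℕ) : ℝ := N * ∏ p ∈ N.primeFactors, (1 + 1 / (p : ℝ))

noncomputable def F1 (N : ℕ) [NeZero N] (ψ : DirichletCharacter ℂ N) (T : ℝ) (η : ℝ) : ℂ :=
  (N : ℂ) ^ (-1 - (η : ℂ)) *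
    (Lam ψ (1 + η + 2 * I * T) * Lam (conjChar ψ) (1 + η - 2 * I * T) /
      (xi (2 + 2 * η) * Lam ψ (1 + 2 * I * T) * Lam (conjChar ψ) (1 - 2 * I * T))) *
    ∏ p ∈ N.primeFactors, (1 + (p : ℂ) ^ (-1 - (η : ℂ)))⁻¹

noncomputable def F2 (N : ℕ) [NeZero N] (ψ : DirichletCharacter ℂ N) (T : ℝ) (η : ℝ) : ℂ :=
  (N : ℂ) ^ (-1 : ℂ) *
    (Lam ψ (1 - η + 2 * I * T) * Lam (conjChar ψ) (1 - η - 2 * I * T) *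
        Lam ψ (1 - 2 * η + 2 * I * T) /
      (xi (2 - 2 * η) * (Lam ψ (1 + 2 * I * T)) ^ 2 *
        Lam (conjChar ψ) (1 + 2 * η - 2 * I * T))) *
    ∏ p ∈ N.primeFactors, (1 + (p : ℂ) ^ (-1 + (η : ℂ)))⁻¹

noncomputable def F3 (N : ℕ) [NeZero N] (ψ : DirichletCharacter ℂ N) (T : ℝ) (η : ℝ) : ℂ :=
  (N : ℂ) ^ (-1 - (η : ℂ)) *
    (Lam ψ (1 - η + 2 * I * T) * Lam (conjChar ψ) (1 + η - 2 * I * T) /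
      (xi 2 * Lam ψ (1 + 2 * I * T) * Lam (conjChar ψ) (1 + 2 * η - 2 * I * T))) *
    ∏ p ∈ N.primeFactors, (1 - (p : ℂ) ^ (-1 + (η : ℂ))) / (1 - (p : ℂ) ^ (-2 : ℂ))

noncomputable def F4 (N : ℕ) [NeZero N] (ψ : DirichletCharacter ℂ N) (T : ℝ) (η : ℝ) : ℂ :=
  (N : ℂ) ^ (-1 : ℂ) *
    (Lam ψ (1 - η + 2 * I * T) * Lam (conjChar ψ) (1 + η - 2 * I * T) /
      (xi 2 * Lam ψ (1 + 2 * I * T) * Lam (conjChar ψ) (1 + 2 * η - 2 * I * T))) *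
    ∏ p ∈ N.primeFactors, (1 - (p : ℂ) ^ (-1 - (η : ℂ))) / (1 - (p : ℂ) ^ (-2 : ℂ))

/-!
`F₁` is the restriction to the real axis of a product of functions that are holomorphic and
nonvanishing at `0`, so `F₁'(0) = F₁(0) · ∑ (logarithmic derivatives of the factors)`.
The only non-formal input is the reflection `Λ(s, ψ̄) = conj Λ(conj s, ψ)`: it holds for
`Re s > 1` because the Dirichlet coefficients of `ψ̄` are conjugate to those of `ψ`, and then
everywhere by the identity theorem, both sides being entire for `ψ ≠ 1`. Hence the two
`Λ`-factors contribute `(Λ'/Λ)(1 + 2iT, ψ)` and its conjugate, i.e. `2 Re (Λ'/Λ)(1 + 2iT, ψ)`.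
-/

section LogDeriv

variable {𝕜 : Type*} [NontriviallyNormedField 𝕜] {f g : 𝕜 → 𝕜} {a b x : 𝕜}

/-- Stated as `f' = f x * a` rather than `f' / f x = a`, so that products need no
nonvanishing hypothesis. -/
def HasLogDerivAt (f : 𝕜 → 𝕜) (a x : 𝕜) : Prop :=
  HasDerivAt f (f x * a) x

theorem HasLogDerivAt.hasDerivAt (h : HasLogDerivAt f a x) : HasDerivAt f (f x * a) x := h

theorem HasDerivAt.hasLogDerivAt {f' : 𝕜} (h : HasDerivAt f f' x) (hx : f x ≠ 0) :
    HasLogDerivAt f (f' / f x) x := by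
  rwa [HasLogDerivAt, mul_div_cancel₀ _ hx]

theorem DifferentiableAt.hasLogDerivAt (h : DifferentiableAt 𝕜 f x) (hx : f x ≠ 0) :
    HasLogDerivAt f (logDeriv f x) x :=
  h.hasDerivAt.hasLogDerivAt hx

theorem hasLogDerivAt_const (c x : 𝕜) : HasLogDerivAt (fun _ => c) 0 x := by
  simpa [HasLogDerivAt] using hasDerivAt_const x c

theorem HasLogDerivAt.mul (hf : HasLogDerivAt f a x) (hg : HasLogDerivAt g b x) :
    HasLogDerivAt (fun z => f z * g z) (a + b) x :=
  (hf.hasDerivAt.fun_mul hg.hasDerivAt).congr_deriv (by ring)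

theorem HasLogDerivAt.inv (hg : HasLogDerivAt g b x) (hx : g x ≠ 0) :
    HasLogDerivAt (fun z => (g z)⁻¹) (-b) x :=
  (hg.hasDerivAt.fun_inv hx).congr_deriv (by field_simp)

theorem HasLogDerivAt.div (hf : HasLogDerivAt f a x) (hg : HasLogDerivAt g b x) (hx : g x ≠ 0) :
    HasLogDerivAt (fun z => f z / g z) (a - b) x := by
  simpa only [div_eq_mul_inv, sub_eq_add_neg] using hf.mul (hg.inv hx)

theorem HasLogDerivAt.finset_prod {ι : Type*} {s : Finset ι} {f : ι → 𝕜 → 𝕜} {a : ι → 𝕜}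
    (h : ∀ i ∈ s, HasLogDerivAt (f i) (a i) x) :
    HasLogDerivAt (fun z => ∏ i ∈ s, f i z) (∑ i ∈ s, a i) x := by
  induction s using Finset.cons_induction with
  | empty => simpa using hasLogDerivAt_const (1 : 𝕜) x
  | cons i s hi ih =>
    rw [Finset.forall_mem_cons] at h
    simpa only [Finset.prod_cons, Finset.sum_cons] using h.1.mul (ih h.2)

theorem HasLogDerivAt.comp_of_eq {g' y : 𝕜} (hf : HasLogDerivAt f a y) (hg : HasDerivAt g g' x)
    (hy : g x = y) : HasLogDerivAt (fun z => f (g z)) (a * g') x := by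
  subst hy
  unfold HasLogDerivAt
  rw [← mul_assoc]
  exact hf.hasDerivAt.comp x hg

end LogDeriv

theorem HasLogDerivAt.const_cpow {g : ℂ → ℂ} {c g' x : ℂ} (hg : HasDerivAt g g' x) (hc : c ≠ 0) :
    HasLogDerivAt (fun z => c ^ g z) (Complex.log c * g') x := by
  simpa only [HasLogDerivAt, mul_assoc] using hg.const_cpow (.inl hc)

open ComplexConjugate

theorem logDeriv_conj_conj {𝕜 : Type*} [RCLike 𝕜] (f : 𝕜 → 𝕜) :
    logDeriv (conj ∘ f ∘ conj) = conj ∘ logDeriv f ∘ conj := by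
  ext s
  simp [logDeriv_apply, deriv_conj_conj]

theorem LSeries_conj (f : ℕ → ℂ) (s : ℂ) :
    LSeries (fun n => conj (f n)) s = conj (LSeries f (conj s)) := by
  rw [LSeries, LSeries, conj_tsum]
  refine tsum_congr fun n => ?_
  rcases eq_or_ne n 0 with rfl | hn
  · simp
  · rw [LSeries.term_of_ne_zero hn, LSeries.term_of_ne_zero hn, map_div₀,
      ← conj_cpow _ _ (by rw [natCast_arg]; positivity), conj_natCast]

theorem DirichletCharacter.IsPrimitive.ne_one {R : Type*} [CommMonoidWithZero R] {n : ℕ} [NeZero n]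
    {χ : DirichletCharacter R n} (hχ : χ.IsPrimitive) (hn : n ≠ 1) : χ ≠ 1 := by
  rintro rfl
  exact hn (hχ.symm.trans DirichletCharacter.conductor_one)

theorem conjChar_ne_one {N : ℕ} {ψ : DirichletCharacter ℂ N} (hψ : ψ ≠ 1) : conjChar ψ ≠ 1 :=
  (MulChar.ringHomComp_ne_one_iff (RingHom.injective _)).mpr hψ

theorem differentiableAt_Gamma_half {s : ℂ} (hs : 0 < s.re) :
    DifferentiableAt ℂ (fun s => Gamma (s / 2)) s := by
  refine (differentiableAt_Gamma _ fun m hm => ?_).comp s (differentiableAt_id.div_const 2)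
  have := congrArg re hm
  simp only [div_ofNat_re, neg_re, natCast_re] at this
  linarith [m.cast_nonneg (α := ℝ)]

theorem Gamma_half_ne_zero {s : ℂ} (hs : 0 < s.re) : Gamma (s / 2) ≠ 0 :=
  Gamma_ne_zero_of_re_pos (by rw [div_ofNat_re]; positivity)

theorem hasLogDerivAt_inv_one_add_cpow {p : ℕ} (hp : p ≠ 0) :
    HasLogDerivAt (fun z : ℂ => (1 + (p : ℂ) ^ (-1 - z))⁻¹) ((Real.log p / (p + 1) : ℝ) : ℂ) 0 := by
  have hp' : (p : ℂ) ≠ 0 := Nat.cast_ne_zero.mpr hp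
  have hpow : (p : ℂ) ^ (-1 - (0 : ℂ)) = (p : ℂ)⁻¹ := by simp [cpow_neg_one]
  have hne : 1 + (p : ℂ) ^ (-1 - (0 : ℂ)) ≠ 0 := by
    rw [hpow]
    exact ne_of_apply_ne re (by simp; positivity)
  have hder :=
    (((hasDerivAt_id' (0 : ℂ)).const_sub (-1)).const_cpow (c := (p : ℂ)) (.inl hp')).const_add 1
  convert (hder.hasLogDerivAt hne).inv hne using 1
  rw [hpow, ← natCast_log]
  push_cast
  field_simp

section

variable {N : ℕ} [NeZero N] {ψ : DirichletCharacter ℂ N}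

theorem LFunction_conjChar (hψ : ψ ≠ 1) :
    DirichletCharacter.LFunction (conjChar ψ) = conj ∘ DirichletCharacter.LFunction ψ ∘ conj := by
  refine (analyticOnNhd_univ_iff_differentiable.mpr
    (DirichletCharacter.differentiable_LFunction (conjChar_ne_one hψ))).eq_of_eventuallyEq
    (analyticOnNhd_univ_iff_differentiable.mpr fun w => differentiableAt_conj_conj_iff.mpr
      (DirichletCharacter.differentiable_LFunction hψ _))
    (z₀ := 2) ?_
  filter_upwards [(isOpen_lt continuous_const continuous_re).mem_nhds
    (by norm_num : (1 : ℝ) < (2 : ℂ).re)] with w hw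
  rw [Function.comp_apply, Function.comp_apply,
    DirichletCharacter.LFunction_eq_LSeries _ hw,
    DirichletCharacter.LFunction_eq_LSeries _ (by rwa [conj_re]), ← LSeries_conj]
  rfl

theorem differentiableAt_Lam (hψ : ψ ≠ 1) {s : ℂ} (hs : 0 < s.re) :
    DifferentiableAt ℂ (Lam ψ) s :=
  (((differentiableAt_id.div_const 2).const_cpow (.inl (by simp [NeZero.ne N]))).mul
    (differentiableAt_Gamma_half hs)).mul (DirichletCharacter.differentiable_LFunction hψ s)

theorem Lam_ne_zero (hψ : ψ ≠ 1) {s : ℂ} (hs : 1 ≤ s.re) : Lam ψ s ≠ 0 :=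
  mul_ne_zero (mul_ne_zero (by simp [NeZero.ne N]) (Gamma_half_ne_zero (by linarith)))
    (DirichletCharacter.LFunction_ne_zero_of_one_le_re ψ (.inl hψ) hs)

theorem hasLogDerivAt_Lam (hψ : ψ ≠ 1) {s : ℂ} (hs : 1 ≤ s.re) :
    HasLogDerivAt (Lam ψ) (logDeriv (Lam ψ) s) s :=
  (differentiableAt_Lam hψ (by linarith)).hasLogDerivAt (Lam_ne_zero hψ hs)

theorem Lam_conjChar (hψ : ψ ≠ 1) : Lam (conjChar ψ) = conj ∘ Lam ψ ∘ conj := by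
  ext s
  have harg : ((N : ℂ) / Real.pi).arg ≠ Real.pi := by
    rw [← ofReal_natCast, ← ofReal_div, arg_ofReal_of_nonneg (by positivity)]
    exact Real.pi_ne_zero.symm
  simp only [Lam, LFunction_conjChar hψ, Function.comp_apply, map_mul, ← Gamma_conj,
    map_div₀, conj_conj, map_ofNat]
  rw [show conj s / 2 = conj (s / 2) by rw [map_div₀, map_ofNat], ← conj_cpow _ _ harg]
  simp

theorem logDeriv_Lam_conjChar (hψ : ψ ≠ 1) (s : ℂ) :
    logDeriv (Lam (conjChar ψ)) s = conj (logDeriv (Lam ψ) (conj s)) := by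
  rw [Lam_conjChar hψ, logDeriv_conj_conj]
  rfl

theorem differentiableAt_xi_two : DifferentiableAt ℂ xi 2 :=
  (((differentiableAt_id.neg.div_const 2).const_cpow (.inl (by simp [Real.pi_ne_zero]))).mul
    (differentiableAt_Gamma_half (by norm_num))).mul (differentiableAt_riemannZeta (by norm_num))

theorem xi_two_ne_zero : xi 2 ≠ 0 :=
  mul_ne_zero (mul_ne_zero (by simp [Real.pi_ne_zero]) (Gamma_half_ne_zero (by norm_num)))
    (riemannZeta_ne_zero_of_one_lt_re (by norm_num))

theorem hasDerivAt_F1_zero (hψ : ψ ≠ 1) (T : ℝ) :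
    HasDerivAt (F1 N ψ T) (F1 N ψ T 0 *
      (-(Real.log N : ℂ) + 2 * ((logDeriv (Lam ψ) (1 + 2 * I * T)).re : ℂ) - 2 * logDeriv xi 2
        + ∑ p ∈ N.primeFactors, ((Real.log p / (p + 1) : ℝ) : ℂ))) 0 := by
  set s : ℂ := 1 + 2 * I * T
  have hs : s.re = 1 := by simp [s]
  have hLam' : HasLogDerivAt (Lam (conjChar ψ)) (conj (logDeriv (Lam ψ) s)) (conj s) := by
    simpa only [logDeriv_Lam_conjChar hψ, conj_conj] using
      hasLogDerivAt_Lam (conjChar_ne_one hψ) (s := conj s) (by simp [hs])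
  have hNpow := HasLogDerivAt.const_cpow ((hasDerivAt_id' (0 : ℂ)).const_sub (-1))
    (Nat.cast_ne_zero.mpr (NeZero.ne N))
  have hnum := (hasLogDerivAt_Lam hψ hs.ge |>.comp_of_eq
      (((hasDerivAt_id' 0).const_add 1).add_const (2 * I * T)) (by simp [s])).mul
    (hLam'.comp_of_eq (((hasDerivAt_id' 0).const_add 1).sub_const (2 * I * T))
      (by simp [s, map_ofNat, sub_eq_add_neg]))
  have hden := ((differentiableAt_xi_two.hasLogDerivAt xi_two_ne_zero).comp_of_eq
      (((hasDerivAt_id' 0).const_mul 2).const_add 2) (by simp)).mul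
    (hasLogDerivAt_const (Lam ψ s) 0) |>.mul
    (hasLogDerivAt_const (Lam (conjChar ψ) (1 - 2 * I * T)) 0)
  have hden0 : xi 2 * Lam ψ s * Lam (conjChar ψ) (1 - 2 * I * T) ≠ 0 :=
    mul_ne_zero (mul_ne_zero xi_two_ne_zero (Lam_ne_zero hψ hs.ge))
      (Lam_ne_zero (conjChar_ne_one hψ) (by simp))
  have hprod := HasLogDerivAt.finset_prod (s := N.primeFactors)
    fun p hp => hasLogDerivAt_inv_one_add_cpow (Nat.prime_of_mem_primeFactors hp).ne_zero
  have hG := (hNpow.mul (hnum.div hden (by simpa using hden0))).mul hprod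
  -- `F1 N ψ T` is definitionally `fun η : ℝ => G η` for the holomorphic function `G` of `hG`.
  refine (ofReal_zero ▸ hG).hasDerivAt.comp_ofReal.congr_deriv (congrArg _ ?_)
  simp only [ofReal_zero, mul_one, add_zero, add_conj, natCast_log]
  push_cast
  ring

end

theorem F1_deriv_at_zero_general (N : ℕ) [NeZero N] (hN : 2 ≤ N)
    (ψ : DirichletCharacter ℂ N) (hprim : ψ.IsPrimitive) (T : ℝ) :
    DifferentiableAt ℝ (F1 N ψ T) 0 ∧
      deriv (F1 N ψ T) 0 = F1 N ψ T 0 *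
        (-(Real.log N : ℂ)
          + 2 * (((deriv (Lam ψ) (1 + 2 * I * T) / Lam ψ (1 + 2 * I * T)).re : ℝ) : ℂ)
          - 2 * (deriv xi 2 / xi 2)
          + ∑ p ∈ N.primeFactors, ((Real.log p / (p + 1) : ℝ) : ℂ)) := by
  have h := hasDerivAt_F1_zero (hprim.ne_one (by omega)) T
  rw [logDeriv_apply, logDeriv_apply] at h
  exact ⟨h.differentiableAt, h.deriv⟩

/-- `F₁` is differentiable at `0` with
`F₁'(0) = F₁(0)·(−log N + 2 Re((Λ'/Λ)(1+2iT,ψ)) − 2(ξ'/ξ)(2) + ∑_{p∣N} log p/(p+1))`. -/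
theorem F1_deriv_at_zero (N : ℕ) [NeZero N] (hN : 2 ≤ N)
    (ψ : DirichletCharacter ℂ N) (hev : ψ.Even) (hprim : ψ.IsPrimitive) (T : ℝ) :
    DifferentiableAt ℝ (F1 N ψ T) 0 ∧
      deriv (F1 N ψ T) 0 = F1 N ψ T 0 *
        (-(Real.log N : ℂ)
          + 2 * (((deriv (Lam ψ) (1 + 2 * I * T) / Lam ψ (1 + 2 * I * T)).re : ℝ) : ℂ)
          - 2 * (deriv xi 2 / xi 2)
          + ∑ p ∈ N.primeFactors, ((Real.log p / (p + 1) : ℝ) : ℂ)) :=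
  F1_deriv_at_zero_general N hN ψ hprim T
end

section
/- Let F : (−δ,δ) → ℂ be twice continuously differentiable at 0 for some δ > 0. Then, with a and b the Laurent coefficients of ξ at s = 1 as in the context, lim_{η→0, η≠0} [ F(η)·ξ(1+η)·ξ(1−η) + F(0)/η² + F'(0)/η ] = −F''(0)/2 + (a²−2b)·F(0). -/
/-!
Write `ξ(1 + w) = w⁻¹ + A(w)` with `A(w) = a + b w + o(w)`. In `ξ(1 + w) ξ(1 - w)` the `w⁻¹`-terms
cancel by the symmetry `w ↦ -w`, leaving `ξ(1 + w) ξ(1 - w) = -w⁻² + (a² - 2b) + o(1)`. The expression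
of the theorem is therefore `F(η) (ξ(1 + η) ξ(1 - η) + η⁻²) - (F(η) - F(0) - η F'(0)) / η²`, and the
last quotient tends to `F''(0) / 2` by Taylor's theorem to second order.
-/

open Complex Filter Topology Asymptotics

theorem ContDiffAt.isLittleO_sub_taylor_two {E : Type*} [NormedAddCommGroup E] [NormedSpace ℝ E]
    {f : ℝ → E} {x₀ : ℝ} (hf : ContDiffAt ℝ 2 f x₀) :
    (fun x => f x - f x₀ - (x - x₀) • deriv f x₀ - ((x - x₀) ^ 2 / 2) • deriv (deriv f) x₀)
      =o[𝓝 x₀] fun x => (x - x₀) ^ 2 := by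
  obtain ⟨r, hr, hdiff⟩ : ∃ r > 0, ∀ x ∈ Metric.ball x₀ r, DifferentiableAt ℝ f x :=
    Metric.eventually_nhds_iff_ball.mp
      ((hf.eventually (by simp)).mono fun x hx => hx.differentiableAt (by simp))
  have hf'' : HasDerivAt (deriv f) (deriv (deriv f) x₀) x₀ :=
    (((hf.fderiv_right (m := 1) (by norm_num)).clm_apply contDiffAt_const).differentiableAt
      (by simp)).hasDerivAt
  have hball : 𝓝[Metric.ball x₀ r] x₀ = 𝓝 x₀ := nhdsWithin_eq_nhds.mpr (Metric.ball_mem_nhds x₀ hr)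
  have key := (convex_ball x₀ r).isLittleO_pow_succ_real (Metric.mem_ball_self hr) (n := 1)
    (f := fun x => f x - f x₀ - (x - x₀) • deriv f x₀ - ((x - x₀) ^ 2 / 2) • deriv (deriv f) x₀)
    (f' := fun x => deriv f x - deriv f x₀ - (x - x₀) • deriv (deriv f) x₀) ?_ ?_
  · rw [hball] at key
    simpa using key
  · intro x hx
    have hsq : HasDerivAt (fun y : ℝ => (y - x₀) ^ 2 / 2) (x - x₀) x := by
      simpa using (((hasDerivAt_id x).sub_const x₀).pow 2).div_const 2
    have hlin : HasDerivAt (fun y : ℝ => (y - x₀) • deriv f x₀) (deriv f x₀) x := by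
      simpa using ((hasDerivAt_id x).sub_const x₀).smul_const (deriv f x₀)
    exact ((((hdiff x hx).hasDerivAt.sub_const (f x₀)).fun_sub hlin).fun_sub
      (hsq.smul_const _)).hasDerivWithinAt
  · rw [hball]
    simpa using hasDerivAt_iff_isLittleO.mp hf''

theorem tendsto_mul_reflect_add_inv_sq {𝕜 : Type*} [NormedField 𝕜] {f : 𝕜 → 𝕜} {s₀ a b : 𝕜}
    (ha : Tendsto (fun s => f s - (s - s₀)⁻¹) (𝓝[≠] s₀) (𝓝 a))
    (hb : Tendsto (fun s => (f s - (s - s₀)⁻¹ - a) / (s - s₀)) (𝓝[≠] s₀) (𝓝 b)) :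
    Tendsto (fun w => f (s₀ + w) * f (s₀ - w) + (w ^ 2)⁻¹) (𝓝[≠] 0) (𝓝 (a ^ 2 - 2 * b)) := by
  have hshift : Tendsto (s₀ + ·) (𝓝[≠] 0) (𝓝[≠] s₀) :=
    ((Homeomorph.addLeft s₀).map_punctured_nhds_eq 0).trans_le (by simp)
  have hneg : Tendsto (-·) (𝓝[≠] (0 : 𝕜)) (𝓝[≠] 0) :=
    ((Homeomorph.neg 𝕜).map_punctured_nhds_eq 0).trans_le (by simp)
  set A : 𝕜 → 𝕜 := fun w => f (s₀ + w) - w⁻¹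
  have hA : Tendsto A (𝓝[≠] 0) (𝓝 a) := by
    simpa [A, Function.comp_def] using ha.comp hshift
  have hA' : Tendsto (fun w => (A w - a) / w) (𝓝[≠] 0) (𝓝 b) := by
    simpa [A, Function.comp_def] using hb.comp hshift
  -- `f (s₀ + w) f (s₀ - w) + w⁻² = A w A (-w) - (A w - a) / w - (A (-w) - a) / (-w)`
  have hlim := (hA.mul (hA.comp hneg)).sub (hA'.add (hA'.comp hneg))
  rw [show a * a - (b + b) = a ^ 2 - 2 * b by ring] at hlim
  refine hlim.congr' ?_
  filter_upwards [self_mem_nhdsWithin] with w (hw : w ≠ 0)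
  simp only [A, Function.comp_apply, ← sub_eq_add_neg]
  field_simp
  ring

theorem ContDiffAt.tendsto_sub_sub_mul_deriv_div_sq {F : ℝ → ℂ} (hF : ContDiffAt ℝ 2 F 0) :
    Tendsto (fun η : ℝ => (F η - F 0 - η * deriv F 0) / (η : ℂ) ^ 2) (𝓝[≠] 0)
      (𝓝 (deriv (deriv F) 0 / 2)) := by
  have ho : (fun η : ℝ => F η - F 0 - η * deriv F 0 - (η : ℂ) ^ 2 / 2 * deriv (deriv F) 0)
      =o[𝓝 0] fun η : ℝ => (η : ℂ) ^ 2 := by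
    refine hF.isLittleO_sub_taylor_two.congr_left (fun η => ?_) |>.trans_isBigO
      (isBigO_of_le _ fun η => ?_)
    · simp [Complex.real_smul]
    · simp
  have hlim := (ho.tendsto_div_nhds_zero.mono_left (nhdsWithin_le_nhds (s := {0}ᶜ))).add_const
    (deriv (deriv F) 0 / 2)
  rw [zero_add] at hlim
  refine hlim.congr' ?_
  filter_upwards [self_mem_nhdsWithin] with η (hη : η ≠ 0)
  have hη' : (η : ℂ) ≠ 0 := ofReal_ne_zero.mpr hη
  field_simp
  ring

theorem xi_mul_laurent_limit_general (F : ℝ → ℂ) (hF : ContDiffAt ℝ 2 F 0)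
    (a b : ℂ)
    (ha : Tendsto (fun s : ℂ => xi s - (s - 1)⁻¹) (𝓝[≠] 1) (𝓝 a))
    (hb : Tendsto (fun s : ℂ => (xi s - (s - 1)⁻¹ - a) / (s - 1)) (𝓝[≠] 1) (𝓝 b)) :
    Tendsto
      (fun η : ℝ => F η * xi (1 + (η : ℂ)) * xi (1 - (η : ℂ)) + F 0 / (η : ℂ) ^ 2
        + deriv F 0 / (η : ℂ))
      (𝓝[≠] 0)
      (𝓝 (-(deriv (deriv F) 0) / 2 + (a ^ 2 - 2 * b) * F 0)) := by
  have hofReal : Tendsto (fun η : ℝ => (η : ℂ)) (𝓝[≠] 0) (𝓝[≠] 0) :=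
    continuous_ofReal.continuousWithinAt.tendsto_nhdsWithin fun _ => by simp
  have hF0 : Tendsto F (𝓝[≠] 0) (𝓝 (F 0)) := hF.continuousAt.tendsto.mono_left nhdsWithin_le_nhds
  have hlim := (hF0.mul ((tendsto_mul_reflect_add_inv_sq ha hb).comp hofReal)).sub
    hF.tendsto_sub_sub_mul_deriv_div_sq
  rw [show F 0 * (a ^ 2 - 2 * b) - deriv (deriv F) 0 / 2
    = -(deriv (deriv F) 0) / 2 + (a ^ 2 - 2 * b) * F 0 by ring] at hlim
  refine hlim.congr' ?_
  filter_upwards [self_mem_nhdsWithin] with η (hη : η ≠ 0)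
  have hη' : (η : ℂ) ≠ 0 := ofReal_ne_zero.mpr hη
  simp only [Function.comp_apply]
  field_simp
  ring

/-- If `F` is twice continuously differentiable at `0` and `a`, `b` are the Laurent
coefficients of `ξ` at `s = 1`, then
`F(η)ξ(1+η)ξ(1−η) + F(0)/η² + F'(0)/η → −F''(0)/2 + (a²−2b)F(0)` as `η → 0`. -/
theorem xi_mul_laurent_limit (δ : ℝ) (hδ : 0 < δ) (F : ℝ → ℂ) (hF : ContDiffAt ℝ 2 F 0)
    (a b : ℂ)
    (ha : Tendsto (fun s : ℂ => xi s - (s - 1)⁻¹) (𝓝[≠] 1) (𝓝 a))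
    (hb : Tendsto (fun s : ℂ => (xi s - (s - 1)⁻¹ - a) / (s - 1)) (𝓝[≠] 1) (𝓝 b)) :
    Tendsto
      (fun η : ℝ => F η * xi (1 + (η : ℂ)) * xi (1 - (η : ℂ)) + F 0 / (η : ℂ) ^ 2
        + deriv F 0 / (η : ℂ))
      (𝓝[≠] 0)
      (𝓝 (-(deriv (deriv F) 0) / 2 + (a ^ 2 - 2 * b) * F 0)) :=
  xi_mul_laurent_limit_general F hF a b ha hb
end
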